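/- arXiv:hep-th/9510065 — 10 statements merged into one kernel-verified Lean document; each statement's English description precedes it below -/
import Mathlib

section
/- Charge-conjugation symmetry of the reduced system: if (χ, a, f, Q) is a solution of system (10) on (0,∞) with sign ε, then the functions χ̃ = π − χ, ã = −(a + 2), f̃ = f, Q̃ = Q form a solution of system (10) on (0,∞) with sign −ε. -/
open Real

theorem charge_conjugation_symmetry_general
    (χ a f Q : ℝ → ℝ) (ε : ℝ)
    (hχ : ∀ ρ > (0:ℝ), HasDerivAt χ (a ρ + 1 - Real.cos (χ ρ)) ρ)
    (ha : ∀ ρ > (0:ℝ), HasDerivAt a (-ε * f ρ / ρ ^ 2) ρ)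
    (hf : ∀ ρ > (0:ℝ), HasDerivAt f (Q ρ) ρ)
    (hQ : ∀ ρ > (0:ℝ), HasDerivAt Q (-Q ρ * Real.sin (χ ρ)) ρ)
    (hQnn : ∀ ρ > (0:ℝ), 0 ≤ Q ρ) :
    (∀ ρ > (0:ℝ), HasDerivAt (fun σ => Real.pi - χ σ)
      ((-(a ρ + 2)) + 1 - Real.cos (Real.pi - χ ρ)) ρ) ∧
    (∀ ρ > (0:ℝ), HasDerivAt (fun σ => -(a σ + 2)) (-(-ε) * f ρ / ρ ^ 2) ρ) ∧
    (∀ ρ > (0:ℝ), HasDerivAt f (Q ρ) ρ) ∧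
    (∀ ρ > (0:ℝ), HasDerivAt Q (-Q ρ * Real.sin (Real.pi - χ ρ)) ρ) ∧
    (∀ ρ > (0:ℝ), 0 ≤ Q ρ) :=
  ⟨fun ρ hρ => ((hχ ρ hρ).const_sub π).congr_deriv (by rw [cos_pi_sub]; ring),
    fun ρ hρ => ((ha ρ hρ).add_const 2).neg.congr_deriv (by ring),
    hf,
    fun ρ hρ => sin_pi_sub (χ ρ) ▸ hQ ρ hρ,
    hQnn⟩

/-- Charge-conjugation symmetry of the reduced static spherically
symmetric Dirac–Maxwell system (10): if `(χ, a, f, Q)` solves (10) on `(0,∞)` with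
sign `ε`, then `(π - χ, -(a+2), f, Q)` solves (10) on `(0,∞)` with sign `-ε`. -/
theorem charge_conjugation_symmetry
    (χ a f Q : ℝ → ℝ) (ε : ℝ) (hε : ε = 1 ∨ ε = -1)
    (hχ : ∀ ρ > (0:ℝ), HasDerivAt χ (a ρ + 1 - Real.cos (χ ρ)) ρ)
    (ha : ∀ ρ > (0:ℝ), HasDerivAt a (-ε * f ρ / ρ ^ 2) ρ)
    (hf : ∀ ρ > (0:ℝ), HasDerivAt f (Q ρ) ρ)
    (hQ : ∀ ρ > (0:ℝ), HasDerivAt Q (-Q ρ * Real.sin (χ ρ)) ρ)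
    (hQnn : ∀ ρ > (0:ℝ), 0 ≤ Q ρ) :
    (∀ ρ > (0:ℝ), HasDerivAt (fun σ => Real.pi - χ σ)
      ((-(a ρ + 2)) + 1 - Real.cos (Real.pi - χ ρ)) ρ) ∧
    (∀ ρ > (0:ℝ), HasDerivAt (fun σ => -(a σ + 2)) (-(-ε) * f ρ / ρ ^ 2) ρ) ∧
    (∀ ρ > (0:ℝ), HasDerivAt f (Q ρ) ρ) ∧
    (∀ ρ > (0:ℝ), HasDerivAt Q (-Q ρ * Real.sin (Real.pi - χ ρ)) ρ) ∧
    (∀ ρ > (0:ℝ), 0 ≤ Q ρ) :=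
  charge_conjugation_symmetry_general χ a f Q ε hχ ha hf hQ hQnn
end

section
/- If (χ, a, f, Q) is a solution of system (10) on (0,∞) such that Q is bounded on (0,∞), then both Q and f have finite one-sided limits Q(0⁺) and f(0⁺) as ρ → 0⁺. -/
open Real Filter Topology Set

/-- A function on `(0,∞)` whose derivative is bounded there has a limit at `0⁺`. -/
lemma limit_of_bounded_deriv (F F' : ℝ → ℝ) (M : ℝ)
    (hF : ∀ ρ > (0:ℝ), HasDerivAt F (F' ρ) ρ)
    (hb : ∀ ρ > (0:ℝ), |F' ρ| ≤ M) :
    ∃ L : ℝ, Tendsto F (𝓝[>] (0:ℝ)) (𝓝 L) := by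
  have hlip : LipschitzOnWith M.toNNReal F (Ioi 0) := by
    apply (convex_Ioi (0:ℝ)).lipschitzOnWith_of_nnnorm_hasDerivWithin_le
      (f' := F') (fun x hx => (hF x hx).hasDerivWithinAt)
    intro x hx
    rw [← NNReal.coe_le_coe, coe_nnnorm, Real.norm_eq_abs, Real.coe_toNNReal']
    exact (hb x hx).trans (le_max_left _ _)
  obtain ⟨g, hg, heq⟩ := hlip.extend_real
  refine ⟨g 0, ?_⟩
  have hgc : Tendsto g (𝓝[>] (0:ℝ)) (𝓝 (g 0)) :=
    (hg.continuous.tendsto 0).mono_left nhdsWithin_le_nhds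
  refine hgc.congr' ?_
  filter_upwards [self_mem_nhdsWithin] with x hx using (heq hx).symm

/-- For a solution `(χ, a, f, Q)` of system (10) on `(0,∞)` with `Q`
bounded on `(0,∞)`, both `Q` and `f` have finite one-sided limits as `ρ → 0⁺`. -/
theorem limits_at_origin_exist
    (χ a f Q : ℝ → ℝ) (ε : ℝ) (hε : ε = 1 ∨ ε = -1)
    (hχ : ∀ ρ > (0:ℝ), HasDerivAt χ (a ρ + 1 - Real.cos (χ ρ)) ρ)
    (ha : ∀ ρ > (0:ℝ), HasDerivAt a (-ε * f ρ / ρ ^ 2) ρ)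
    (hf : ∀ ρ > (0:ℝ), HasDerivAt f (Q ρ) ρ)
    (hQ : ∀ ρ > (0:ℝ), HasDerivAt Q (-Q ρ * Real.sin (χ ρ)) ρ)
    (hQnn : ∀ ρ > (0:ℝ), 0 ≤ Q ρ)
    (hQbdd : ∃ M, ∀ ρ > (0:ℝ), |Q ρ| ≤ M) :
    (∃ Q0 : ℝ, Tendsto Q (𝓝[>] (0:ℝ)) (𝓝 Q0)) ∧
    (∃ f0 : ℝ, Tendsto f (𝓝[>] (0:ℝ)) (𝓝 f0)) := by
  obtain ⟨M, hM⟩ := hQbdd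
  constructor
  · exact limit_of_bounded_deriv Q (fun ρ => -Q ρ * Real.sin (χ ρ)) M hQ (fun ρ hρ => by
      calc |-Q ρ * Real.sin (χ ρ)| = |Q ρ| * |Real.sin (χ ρ)| := by rw [abs_mul, abs_neg]
        _ ≤ M * 1 := mul_le_mul (hM ρ hρ) (abs_le.mpr ⟨Real.neg_one_le_sin _, Real.sin_le_one _⟩) (abs_nonneg _)
              ((abs_nonneg _).trans (hM ρ hρ))
        _ = M := mul_one M)
  · exact limit_of_bounded_deriv f Q M hf hM
end

section
/- Lemma 1 (limit of ρa at the origin): if (χ, a, f, Q) is a solution of system (10) on (0,∞) satisfying condition (C1), then ε ρ a(ρ) converges as ρ → 0⁺, and its limit equals f(0⁺), the limit of f as ρ → 0⁺ (which exists since Q = df/dρ is bounded). -/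
/-!
`f` is nondecreasing (`f' = Q ≥ 0`) and bounded, so `f(0⁺) = f₀` exists. Since
`ρ² (ε a)' = -ε² f = -f → -f₀`, the claim is the `∞/∞` form of l'Hôpital's rule for
`ε a(ρ) / ρ⁻¹`; after the substitution `t = ρ⁻¹` this says that `h(t)/t → L` whenever
`h' → L` at infinity, which follows from the mean value inequality.
-/

open Real Filter Topology Set Asymptotics

theorem isLittleO_sub_mul_id_of_tendsto_deriv {h h' : ℝ → ℝ} {L : ℝ}
    (hh : ∀ᶠ t in atTop, HasDerivAt h (h' t) t) (hlim : Tendsto h' atTop (𝓝 L)) :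
    (fun t => h t - L * t) =o[atTop] id := by
  refine IsLittleO.of_bound fun c hc => ?_
  obtain ⟨T, hT⟩ := eventually_atTop.1 <|
    (hh.and (hlim.eventually (Metric.closedBall_mem_nhds L (half_pos hc)))).and
      (eventually_ge_atTop 0)
  have hT0 : 0 ≤ T := (hT T le_rfl).2
  have hmvt : ∀ t ≥ T, ‖(h t - L * t) - (h T - L * T)‖ ≤ c / 2 * (t - T) := by
    intro t ht
    simpa [Real.norm_of_nonneg (sub_nonneg.2 ht)] using
      (convex_Ici T).norm_image_sub_le_of_norm_hasDerivWithin_le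
        (f := fun s => h s - L * s) (f' := fun s => h' s - L)
        (fun s hs => (((hT s hs).1.1).sub ((hasDerivAt_id s).const_mul L)).hasDerivWithinAt
          |>.congr_deriv (by simp))
        (fun s hs => by simpa [dist_eq_norm] using (hT s hs).1.2) self_mem_Ici ht
  filter_upwards [eventually_ge_atTop T, eventually_ge_atTop (2 * ‖h T - L * T‖ / c)]
    with t hTt hlarge
  rw [div_le_iff₀ hc] at hlarge
  rw [id, Real.norm_of_nonneg (hT0.trans hTt)]
  have := norm_le_norm_add_norm_sub' (h t - L * t) (h T - L * T)
  linarith [hmvt t hTt, mul_nonneg hc.le hT0]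

theorem tendsto_div_self_atTop_of_tendsto_deriv {h h' : ℝ → ℝ} {L : ℝ}
    (hh : ∀ᶠ t in atTop, HasDerivAt h (h' t) t) (hlim : Tendsto h' atTop (𝓝 L)) :
    Tendsto (fun t => h t / t) atTop (𝓝 L) := by
  have := ((isLittleO_sub_mul_id_of_tendsto_deriv hh hlim).tendsto_div_nhds_zero).add_const L
  rw [zero_add] at this
  refine this.congr' ?_
  filter_upwards [eventually_ne_atTop 0] with t ht
  simp only [id]
  field_simp
  ring

theorem tendsto_mul_self_nhdsGT_zero_of_tendsto_sq_mul_deriv {g g' : ℝ → ℝ} {L : ℝ}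
    (hg : ∀ᶠ ρ in 𝓝[>] 0, HasDerivAt g (g' ρ) ρ)
    (hlim : Tendsto (fun ρ => -(ρ ^ 2 * g' ρ)) (𝓝[>] 0) (𝓝 L)) :
    Tendsto (fun ρ => ρ * g ρ) (𝓝[>] 0) (𝓝 L) := by
  have hinv : ∀ᶠ t in atTop, HasDerivAt (fun t => g t⁻¹) (-(t⁻¹ ^ 2 * g' t⁻¹)) t := by
    filter_upwards [tendsto_inv_atTop_nhdsGT_zero.eventually hg, eventually_gt_atTop 0]
      with t ht htpos
    exact (ht.comp t (hasDerivAt_inv htpos.ne')).congr_deriv (by rw [inv_pow]; ring)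
  have := (tendsto_div_self_atTop_of_tendsto_deriv hinv
    (hlim.comp tendsto_inv_atTop_nhdsGT_zero)).comp tendsto_inv_nhdsGT_zero
  refine this.congr fun ρ => ?_
  simp [div_inv_eq_mul, mul_comm]

theorem exists_tendsto_nhdsGT_of_hasDerivAt_nonneg {f f' : ℝ → ℝ} {a : ℝ}
    (hf : ∀ x > a, HasDerivAt f (f' x) x) (hf' : ∀ x > a, 0 ≤ f' x)
    (hbdd : BddBelow (f '' Ioi a)) :
    ∃ l, Tendsto f (𝓝[>] a) (𝓝 l) := by
  have hmono : MonotoneOn f (Ioi a) := by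
    refine monotoneOn_of_hasDerivWithinAt_nonneg (f' := f') (convex_Ioi a)
      (fun x hx => (hf x hx).continuousAt.continuousWithinAt) (fun x hx => ?_) (fun x hx => ?_)
    · exact (hf x (interior_subset hx)).hasDerivWithinAt
    · exact hf' x (interior_subset hx)
  exact ⟨_, hmono.tendsto_nhdsGT hbdd⟩

theorem lemma1_limit_rho_a_general
    (a f Q : ℝ → ℝ) (ε : ℝ) (hε : ε = 1 ∨ ε = -1)
    (ha : ∀ ρ > (0:ℝ), HasDerivAt a (-ε * f ρ / ρ ^ 2) ρ)
    (hf : ∀ ρ > (0:ℝ), HasDerivAt f (Q ρ) ρ)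
    (hQnn : ∀ ρ > (0:ℝ), 0 ≤ Q ρ)
    -- Condition (C1)
    (hfbdd : ∃ Mf, ∀ ρ > (0:ℝ), |f ρ| ≤ Mf) :
    ∃ f0 : ℝ, Tendsto f (𝓝[>] (0:ℝ)) (𝓝 f0) ∧
      Tendsto (fun ρ => ε * ρ * a ρ) (𝓝[>] (0:ℝ)) (𝓝 f0) := by
  obtain ⟨Mf, hMf⟩ := hfbdd
  have hbdd : BddBelow (f '' Ioi 0) :=
    ⟨-Mf, by rintro _ ⟨ρ, hρ, rfl⟩; exact neg_le_of_abs_le (hMf ρ hρ)⟩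
  obtain ⟨f0, hf0⟩ := exists_tendsto_nhdsGT_of_hasDerivAt_nonneg hf hQnn hbdd
  refine ⟨f0, hf0, ?_⟩
  have hεa :
      ∀ᶠ ρ in 𝓝[>] 0, HasDerivAt (fun ρ => ε * a ρ) (ε * (-ε * f ρ / ρ ^ 2)) ρ :=
    eventually_mem_nhdsWithin.mono fun ρ hρ => (ha ρ hρ).const_mul ε
  have hsq : ε * ε = 1 := by rcases hε with rfl | rfl <;> norm_num
  have hlim :
      Tendsto (fun ρ => -(ρ ^ 2 * (ε * (-ε * f ρ / ρ ^ 2)))) (𝓝[>] 0) (𝓝 f0) := by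
    refine hf0.congr' ?_
    filter_upwards [self_mem_nhdsWithin] with ρ hρ
    field_simp [(mem_Ioi.1 hρ).ne']
    linear_combination (-f ρ) * hsq
  simpa only [mul_left_comm, mul_assoc] using
    tendsto_mul_self_nhdsGT_zero_of_tendsto_sq_mul_deriv hεa hlim

/-- **Lemma 1, limit of `ρa` at the origin.** For a solution
`(χ, a, f, Q)` of system (10) on `(0,∞)` satisfying condition (C1), the function
`ε ρ a(ρ)` converges as `ρ → 0⁺`, with limit equal to `f(0⁺)`, the limit of `f`
as `ρ → 0⁺` (which exists since `Q = df/dρ` is bounded). -/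
theorem lemma1_limit_rho_a
    (χ a f Q : ℝ → ℝ) (ε : ℝ) (hε : ε = 1 ∨ ε = -1)
    (hχ : ∀ ρ > (0:ℝ), HasDerivAt χ (a ρ + 1 - Real.cos (χ ρ)) ρ)
    (ha : ∀ ρ > (0:ℝ), HasDerivAt a (-ε * f ρ / ρ ^ 2) ρ)
    (hf : ∀ ρ > (0:ℝ), HasDerivAt f (Q ρ) ρ)
    (hQ : ∀ ρ > (0:ℝ), HasDerivAt Q (-Q ρ * Real.sin (χ ρ)) ρ)
    (hQnn : ∀ ρ > (0:ℝ), 0 ≤ Q ρ)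
    -- Condition (C1)
    (hfbdd : ∃ Mf, ∀ ρ > (0:ℝ), |f ρ| ≤ Mf)
    (hQbdd : ∃ MQ, ∀ ρ > (0:ℝ), |Q ρ| ≤ MQ)
    (hflim : ∃ Lf, Tendsto f atTop (𝓝 Lf))
    (hQlim : ∃ LQ, Tendsto Q atTop (𝓝 LQ)) :
    ∃ f0 : ℝ, Tendsto f (𝓝[>] (0:ℝ)) (𝓝 f0) ∧
      Tendsto (fun ρ => ε * ρ * a ρ) (𝓝[>] (0:ℝ)) (𝓝 f0) :=
  lemma1_limit_rho_a_general a f Q ε hε ha hf hQnn hfbdd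
end

section
/- Lemma 1 (divergence of the potential for nonzero central charge): if (χ, a, f, Q) is a solution of system (10) on (0,∞) satisfying condition (C1), and the limit f(0⁺) of f as ρ → 0⁺ is nonzero, then a is unbounded as ρ → 0⁺; in fact |a(ρ)| → ∞ as ρ → 0⁺. -/
open Real Filter Topology Set

/-!
Near `0⁺` the equation `a' = -ε f / ρ²` has a right-hand side of constant sign and size at least
`c / ρ²`, where `c = |f(0⁺)| / 2 > 0`. Integrating from `ρ` to a fixed `δ`, `a(ρ)` differs from
`a(δ)` by at least `c (1/ρ - 1/δ)`, which blows up as `ρ → 0⁺`.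
-/

theorem tendsto_nhdsGT_zero_atBot_of_le_deriv {a a' : ℝ → ℝ} {c : ℝ} (hc : 0 < c)
    (ha : ∀ᶠ x in 𝓝[>] 0, HasDerivAt a (a' x) x)
    (hle : ∀ᶠ x in 𝓝[>] 0, c / x ^ 2 ≤ a' x) :
    Tendsto a (𝓝[>] 0) atBot := by
  obtain ⟨u, hu : 0 < u, hsub⟩ := mem_nhdsGT_iff_exists_Ioo_subset.mp (ha.and hle)
  have hderiv : ∀ x ∈ Ioo 0 u, HasDerivAt (fun x => a x + c / x) (a' x - c / x ^ 2) x := by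
    intro x hx
    simpa only [div_eq_mul_inv, sub_eq_add_neg, mul_neg] using
      (hsub hx).1.fun_add ((hasDerivAt_inv hx.1.ne').const_mul c)
  have hmono : MonotoneOn (fun x => a x + c / x) (Ioo 0 u) := by
    refine monotoneOn_of_hasDerivWithinAt_nonneg (convex_Ioo 0 u)
      (fun x hx => (hderiv x hx).continuousAt.continuousWithinAt)
      (fun x hx => (hderiv x (interior_subset hx)).hasDerivWithinAt) fun x hx => ?_
    exact sub_nonneg.mpr (hsub (interior_subset hx)).2
  set K := a (u / 2) + c / (u / 2) with hK
  have hbound : ∀ x ∈ Ioo 0 (u / 2), a x ≤ K - c / x := fun x hx => by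
    have := hmono ⟨hx.1, by linarith [hx.2]⟩ ⟨half_pos hu, half_lt_self hu⟩ hx.2.le
    simp only at this
    linarith
  have hlim : Tendsto (fun x : ℝ => K - c / x) (𝓝[>] 0) atBot := by
    simpa only [sub_eq_add_neg, div_eq_mul_inv, ← neg_mul] using
      tendsto_atBot_add_const_left _ K
        (tendsto_inv_nhdsGT_zero.const_mul_atTop_of_neg (neg_neg_of_pos hc))
  refine tendsto_atBot_mono' _ ?_ hlim
  filter_upwards [Ioo_mem_nhdsGT (half_pos hu)] with x hx using hbound x hx

theorem tendsto_abs_nhdsGT_zero_atTop_of_hasDerivAt_div_sq {a g : ℝ → ℝ} {b : ℝ}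
    (ha : ∀ᶠ x in 𝓝[>] 0, HasDerivAt a (g x / x ^ 2) x)
    (hg : Tendsto g (𝓝[>] 0) (𝓝 b)) (hb : b ≠ 0) :
    Tendsto (fun x => |a x|) (𝓝[>] 0) atTop := by
  rcases hb.lt_or_gt with hb | hb
  · have hle : ∀ᶠ x in 𝓝[>] 0, -b / 2 / x ^ 2 ≤ -(g x / x ^ 2) := by
      filter_upwards [hg.eventually (gt_mem_nhds (by linarith : b < b / 2))] with x hx
      rw [← neg_div]
      exact div_le_div_of_nonneg_right (by linarith) (sq_nonneg x)
    have := tendsto_nhdsGT_zero_atBot_of_le_deriv (by linarith) (ha.mono fun x h => h.neg) hle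
    exact (tendsto_abs_atBot_atTop.comp this).congr fun x => abs_neg (a x)
  · have hle : ∀ᶠ x in 𝓝[>] 0, b / 2 / x ^ 2 ≤ g x / x ^ 2 := by
      filter_upwards [hg.eventually (lt_mem_nhds (by linarith : b / 2 < b))] with x hx
      exact div_le_div_of_nonneg_right hx.le (sq_nonneg x)
    have := tendsto_nhdsGT_zero_atBot_of_le_deriv (by linarith) ha hle
    exact tendsto_abs_atBot_atTop.comp this

theorem lemma1_potential_unbounded_general
    (a f : ℝ → ℝ) (ε : ℝ) (hε : ε = 1 ∨ ε = -1)
    (ha : ∀ ρ > (0:ℝ), HasDerivAt a (-ε * f ρ / ρ ^ 2) ρ)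
    (f0 : ℝ) (hf0 : Tendsto f (𝓝[>] (0:ℝ)) (𝓝 f0)) (hf0ne : f0 ≠ 0) :
    Tendsto (fun ρ => |a ρ|) (𝓝[>] (0:ℝ)) atTop := by
  have hε0 : ε ≠ 0 := by rcases hε with rfl | rfl <;> norm_num
  exact tendsto_abs_nhdsGT_zero_atTop_of_hasDerivAt_div_sq (g := fun ρ => -ε * f ρ)
    (eventually_nhdsWithin_of_forall ha) (hf0.const_mul (-ε))
    (mul_ne_zero (neg_ne_zero.mpr hε0) hf0ne)

/-- **Lemma 1, divergence of the potential.** For a solution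
`(χ, a, f, Q)` of system (10) on `(0,∞)` satisfying condition (C1), if the limit
`f(0⁺)` of `f` as `ρ → 0⁺` is nonzero, then `|a(ρ)| → ∞` as `ρ → 0⁺`. -/
theorem lemma1_potential_unbounded
    (χ a f Q : ℝ → ℝ) (ε : ℝ) (hε : ε = 1 ∨ ε = -1)
    (hχ : ∀ ρ > (0:ℝ), HasDerivAt χ (a ρ + 1 - Real.cos (χ ρ)) ρ)
    (ha : ∀ ρ > (0:ℝ), HasDerivAt a (-ε * f ρ / ρ ^ 2) ρ)
    (hf : ∀ ρ > (0:ℝ), HasDerivAt f (Q ρ) ρ)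
    (hQ : ∀ ρ > (0:ℝ), HasDerivAt Q (-Q ρ * Real.sin (χ ρ)) ρ)
    (hQnn : ∀ ρ > (0:ℝ), 0 ≤ Q ρ)
    -- Condition (C1)
    (hfbdd : ∃ Mf, ∀ ρ > (0:ℝ), |f ρ| ≤ Mf)
    (hQbdd : ∃ MQ, ∀ ρ > (0:ℝ), |Q ρ| ≤ MQ)
    (hflim : ∃ Lf, Tendsto f atTop (𝓝 Lf))
    (hQlim : ∃ LQ, Tendsto Q atTop (𝓝 LQ))
    (f0 : ℝ) (hf0 : Tendsto f (𝓝[>] (0:ℝ)) (𝓝 f0)) (hf0ne : f0 ≠ 0) :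
    Tendsto (fun ρ => |a ρ|) (𝓝[>] (0:ℝ)) atTop :=
  lemma1_potential_unbounded_general a f ε hε ha f0 hf0 hf0ne
end

section
/- Exponential lower bound for the shell charge: if (χ, a, f, Q) is a solution of system (10) on (0,∞) with Q bounded, so that the limits Q(0⁺) and f(0⁺) as ρ → 0⁺ exist, then for every ρ > 0 one has Q(ρ) ≥ Q(0⁺) e^{−ρ}, and consequently f(ρ) − f(0⁺) ≥ Q(0⁺)(1 − e^{−ρ}). -/
open Real Filter Topology Set

/-! Since `sin χ ≤ 1` and `Q ≥ 0`, the charge satisfies `Q' ≥ -Q`, so `Q eᵖ` is nondecreasing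
and bounded below by its limit `Q(0⁺)` at the origin. Then `f' = Q ≥ Q(0⁺) e^{-ρ}`, so
`f + Q(0⁺) e^{-ρ}` is nondecreasing as well and bounded below by `f(0⁺) + Q(0⁺)`. -/

lemma le_of_hasDerivAt_nonneg_of_tendsto_nhdsGT {g g' : ℝ → ℝ} {a L : ℝ}
    (hg : ∀ x > a, HasDerivAt g (g' x) x) (hg' : ∀ x > a, 0 ≤ g' x)
    (hL : Tendsto g (𝓝[>] a) (𝓝 L)) : ∀ x > a, L ≤ g x := by
  have hmono : MonotoneOn g (Ioi a) :=
    monotoneOn_of_hasDerivWithinAt_nonneg (convex_Ioi a)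
      (fun x hx => (hg x hx).continuousAt.continuousWithinAt)
      (fun x hx => (hg x (interior_subset hx)).hasDerivWithinAt)
      (fun x hx => hg' x (interior_subset hx))
  intro x hx
  refine le_of_tendsto hL ?_
  filter_upwards [Ioo_mem_nhdsGT hx] with y hy
  exact hmono hy.1 hx hy.2.le

lemma mul_exp_neg_le_of_hasDerivAt_ge_neg {Q Q' : ℝ → ℝ} {L : ℝ}
    (hQ : ∀ x > 0, HasDerivAt Q (Q' x) x) (hQ' : ∀ x > 0, -Q x ≤ Q' x)
    (hL : Tendsto Q (𝓝[>] 0) (𝓝 L)) : ∀ x > 0, L * exp (-x) ≤ Q x := by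
  have hexp : Tendsto exp (𝓝[>] 0) (𝓝 1) := by
    simpa using (continuous_exp.tendsto 0).mono_left nhdsWithin_le_nhds
  have key := le_of_hasDerivAt_nonneg_of_tendsto_nhdsGT
    (g := fun x => Q x * exp x) (g' := fun x => Q' x * exp x + Q x * exp x)
    (fun x hx => (hQ x hx).mul (hasDerivAt_exp x))
    (fun x hx => by nlinarith [hQ' x hx, exp_pos x]) (by simpa using hL.mul hexp)
  intro x hx
  calc L * exp (-x) ≤ Q x * exp x * exp (-x) :=
        mul_le_mul_of_nonneg_right (key x hx) (exp_pos _).le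
    _ = Q x := by rw [mul_assoc, ← exp_add, add_neg_cancel, exp_zero, mul_one]

lemma mul_one_sub_exp_neg_le_sub_of_hasDerivAt_ge {f f' : ℝ → ℝ} {c f₀ : ℝ}
    (hf : ∀ x > 0, HasDerivAt f (f' x) x) (hf' : ∀ x > 0, c * exp (-x) ≤ f' x)
    (hf₀ : Tendsto f (𝓝[>] 0) (𝓝 f₀)) : ∀ x > 0, c * (1 - exp (-x)) ≤ f x - f₀ := by
  have hexp : Tendsto (fun x => exp (-x)) (𝓝[>] 0) (𝓝 1) := by
    simpa using ((continuous_neg.rexp).tendsto 0).mono_left nhdsWithin_le_nhds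
  have key := le_of_hasDerivAt_nonneg_of_tendsto_nhdsGT
    (g := fun x => f x + c * exp (-x)) (g' := fun x => f' x + c * -exp (-x))
    (fun x hx => (hf x hx).add (((hasDerivAt_neg x).exp.congr_deriv (by ring)).const_mul c))
    (fun x hx => by linarith [hf' x hx]) (by simpa using hf₀.add (hexp.const_mul c))
  intro x hx
  linarith [key x hx]

theorem shell_charge_exponential_lower_bound_general
    (χ f Q : ℝ → ℝ)
    (hf : ∀ ρ > (0:ℝ), HasDerivAt f (Q ρ) ρ)
    (hQ : ∀ ρ > (0:ℝ), HasDerivAt Q (-Q ρ * Real.sin (χ ρ)) ρ)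
    (hQnn : ∀ ρ > (0:ℝ), 0 ≤ Q ρ)
    (Q0 f0 : ℝ)
    (hQ0 : Tendsto Q (𝓝[>] (0:ℝ)) (𝓝 Q0))
    (hf0 : Tendsto f (𝓝[>] (0:ℝ)) (𝓝 f0)) :
    ∀ ρ > (0:ℝ), Q0 * Real.exp (-ρ) ≤ Q ρ ∧
      Q0 * (1 - Real.exp (-ρ)) ≤ f ρ - f0 := by
  have hQlow : ∀ ρ > (0:ℝ), Q0 * exp (-ρ) ≤ Q ρ :=
    mul_exp_neg_le_of_hasDerivAt_ge_neg hQ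
      (fun ρ hρ => by nlinarith [hQnn ρ hρ, sin_le_one (χ ρ)]) hQ0
  exact fun ρ hρ => ⟨hQlow ρ hρ, mul_one_sub_exp_neg_le_sub_of_hasDerivAt_ge hf hQlow hf0 ρ hρ⟩

/-- Exponential lower bound for the shell charge: for a solution
`(χ, a, f, Q)` of system (10) on `(0,∞)` with `Q` bounded (so that the limits
`Q(0⁺)` and `f(0⁺)` exist), one has `Q(ρ) ≥ Q(0⁺) e^{−ρ}` and
`f(ρ) − f(0⁺) ≥ Q(0⁺)(1 − e^{−ρ})` for every `ρ > 0`. -/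
theorem shell_charge_exponential_lower_bound
    (χ a f Q : ℝ → ℝ) (ε : ℝ) (hε : ε = 1 ∨ ε = -1)
    (hχ : ∀ ρ > (0:ℝ), HasDerivAt χ (a ρ + 1 - Real.cos (χ ρ)) ρ)
    (ha : ∀ ρ > (0:ℝ), HasDerivAt a (-ε * f ρ / ρ ^ 2) ρ)
    (hf : ∀ ρ > (0:ℝ), HasDerivAt f (Q ρ) ρ)
    (hQ : ∀ ρ > (0:ℝ), HasDerivAt Q (-Q ρ * Real.sin (χ ρ)) ρ)
    (hQnn : ∀ ρ > (0:ℝ), 0 ≤ Q ρ)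
    (hQbdd : ∃ M, ∀ ρ > (0:ℝ), |Q ρ| ≤ M)
    (Q0 f0 : ℝ)
    (hQ0 : Tendsto Q (𝓝[>] (0:ℝ)) (𝓝 Q0))
    (hf0 : Tendsto f (𝓝[>] (0:ℝ)) (𝓝 f0)) :
    ∀ ρ > (0:ℝ), Q0 * Real.exp (-ρ) ≤ Q ρ ∧
      Q0 * (1 - Real.exp (-ρ)) ≤ f ρ - f0 :=
  shell_charge_exponential_lower_bound_general χ f Q hf hQ hQnn Q0 f0 hQ0 hf0
end

section
/- Lemma 2 (divergence of the angular variable): if (χ, a, f, Q) is a solution of system (10) on (0,∞) satisfying condition (C1), and f(0⁺) ≠ 0 (where f(0⁺) is the limit of f as ρ → 0⁺), then χ is unbounded as ρ → 0⁺; more precisely, if f(0⁺) < 0 then ε χ(ρ) → +∞ as ρ → 0⁺, and if f(0⁺) > 0 then ε χ(ρ) → −∞ as ρ → 0⁺. -/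
open Real Filter Topology Set

/-- Core lemma: if `g' = A + r` with `|r| ≤ 2`, `A' = -f/ρ²`, and `f → f0 > 0`
as `ρ → 0⁺`, then `g → -∞` as `ρ → 0⁺`. -/
lemma core_atBot (g A f : ℝ → ℝ)
    (hg : ∀ ρ > (0:ℝ), ∃ r : ℝ, |r| ≤ 2 ∧ HasDerivAt g (A ρ + r) ρ)
    (hA : ∀ ρ > (0:ℝ), HasDerivAt A (-(f ρ) / ρ ^ 2) ρ)
    (f0 : ℝ) (hf0 : Tendsto f (𝓝[>] (0:ℝ)) (𝓝 f0)) (hpos : 0 < f0) :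
    Tendsto g (𝓝[>] (0:ℝ)) atBot := by
  set c := f0 / 2 with hc
  have hcpos : 0 < c := by positivity
  obtain ⟨δ, hδpos, hfδ⟩ := Metric.tendsto_nhdsWithin_nhds.mp hf0 c hcpos
  have hflb : ∀ t : ℝ, 0 < t → t < δ → c ≤ f t := by
    intro t ht htδ
    have h1 : dist (f t) f0 < c := hfδ (Set.mem_Ioi.mpr ht)
      (by rwa [Real.dist_eq, sub_zero, abs_of_pos ht])
    rw [Real.dist_eq] at h1
    have := abs_lt.mp h1
    have : f0 - c < f t := by linarith [this.1]
    simp only [hc] at this ⊢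
    linarith
  set ρ₀ := δ / 2 with hρ₀def
  have hρ₀pos : 0 < ρ₀ := by positivity
  have hρ₀δ : ρ₀ < δ := by rw [hρ₀def]; linarith
  -- ψ s = A s - c / s is antitone on (0, ρ₀]
  set ψ := fun s : ℝ => A s - c * s⁻¹ with hψdef
  have hψd : ∀ s : ℝ, 0 < s → HasDerivAt ψ (-(f s) / s ^ 2 - c * -(s ^ 2)⁻¹) s := by
    intro s hs
    exact (hA s hs).sub ((hasDerivAt_inv hs.ne').const_mul c)
  have hψanti : AntitoneOn ψ (Ioc 0 ρ₀) := by
    apply antitoneOn_of_deriv_nonpos (convex_Ioc 0 ρ₀)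
    · intro x hx
      exact (hψd x hx.1).continuousAt.continuousWithinAt
    · intro x hx
      rw [interior_Ioc] at hx
      exact (hψd x hx.1).differentiableAt.differentiableWithinAt
    · intro x hx
      rw [interior_Ioc] at hx
      rw [(hψd x hx.1).deriv]
      have hfx : c ≤ f x := hflb x hx.1 (lt_trans hx.2 hρ₀δ)
      have hx2 : (0:ℝ) < x ^ 2 := pow_pos hx.1 2
      have : -(f x) / x ^ 2 - c * -(x ^ 2)⁻¹ = (c - f x) / x ^ 2 := by
        have hxne : x ≠ 0 := ne_of_gt hx.1
        field_simp
        ring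
      rw [this]
      apply div_nonpos_of_nonpos_of_nonneg (by linarith) hx2.le
  set K := ψ ρ₀ - 2 with hKdef
  have hAlb : ∀ x ∈ Ioc (0:ℝ) ρ₀, c * x⁻¹ + ψ ρ₀ ≤ A x := by
    intro x hx
    have := hψanti hx (Set.right_mem_Ioc.mpr hρ₀pos) hx.2
    simp only [hψdef] at this
    linarith
  -- φ s = g s - c * log s - K * s is monotone on (0, ρ₀]
  set φ := fun s : ℝ => g s - c * Real.log s - K * s with hφdef
  have hφd : ∀ s : ℝ, 0 < s → ∃ r : ℝ, |r| ≤ 2 ∧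
      HasDerivAt φ (A s + r - c * s⁻¹ - K * 1) s := by
    intro s hs
    obtain ⟨r, hr, hgs⟩ := hg s hs
    exact ⟨r, hr, (hgs.sub ((Real.hasDerivAt_log hs.ne').const_mul c)).sub
      ((hasDerivAt_id s).const_mul K)⟩
  have hφmono : MonotoneOn φ (Ioc 0 ρ₀) := by
    apply monotoneOn_of_deriv_nonneg (convex_Ioc 0 ρ₀)
    · intro x hx
      obtain ⟨r, hr, hd⟩ := hφd x hx.1
      exact hd.continuousAt.continuousWithinAt
    · intro x hx
      rw [interior_Ioc] at hx
      obtain ⟨r, hr, hd⟩ := hφd x hx.1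
      exact hd.differentiableAt.differentiableWithinAt
    · intro x hx
      rw [interior_Ioc] at hx
      obtain ⟨r, hr, hd⟩ := hφd x hx.1
      rw [hd.deriv]
      have hAx := hAlb x ⟨hx.1, hx.2.le⟩
      have := abs_le.mp hr
      simp only [hKdef]
      linarith [this.1]
  set C := φ ρ₀ + |K| * ρ₀ with hCdef
  have hbound : ∀ ρ ∈ Ioc (0:ℝ) ρ₀, g ρ ≤ C + c * Real.log ρ := by
    intro ρ hρ
    have h1 : φ ρ ≤ φ ρ₀ := hφmono hρ (Set.right_mem_Ioc.mpr hρ₀pos) hρ.2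
    simp only [hφdef] at h1
    have h2 : K * ρ ≤ |K| * ρ₀ := by
      calc K * ρ ≤ |K| * ρ := by
            apply mul_le_mul_of_nonneg_right (le_abs_self K) hρ.1.le
        _ ≤ |K| * ρ₀ := by
            apply mul_le_mul_of_nonneg_left hρ.2 (abs_nonneg K)
    simp only [hCdef, hφdef]
    linarith
  have hlog : Tendsto (fun ρ : ℝ => C + c * Real.log ρ) (𝓝[>] (0:ℝ)) atBot := by
    apply tendsto_atBot_add_const_left _ C
    exact Real.tendsto_log_nhdsGT_zero.const_mul_atBot hcpos
  apply tendsto_atBot_mono' _ _ hlog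
  filter_upwards [Ioc_mem_nhdsGT_of_mem ⟨le_refl (0:ℝ), hρ₀pos⟩] with ρ hρ
  exact hbound ρ hρ

/-- **Lemma 2, divergence of the angular variable.** For a solution
`(χ, a, f, Q)` of system (10) on `(0,∞)` satisfying condition (C1) with
`f(0⁺) ≠ 0`: if `f(0⁺) < 0` then `ε χ(ρ) → +∞` as `ρ → 0⁺`, and if `f(0⁺) > 0`
then `ε χ(ρ) → −∞` as `ρ → 0⁺`; in particular `χ` is unbounded near the origin. -/
theorem lemma2_angular_variable_diverges
    (χ a f Q : ℝ → ℝ) (ε : ℝ) (hε : ε = 1 ∨ ε = -1)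
    (hχ : ∀ ρ > (0:ℝ), HasDerivAt χ (a ρ + 1 - Real.cos (χ ρ)) ρ)
    (ha : ∀ ρ > (0:ℝ), HasDerivAt a (-ε * f ρ / ρ ^ 2) ρ)
    (hf : ∀ ρ > (0:ℝ), HasDerivAt f (Q ρ) ρ)
    (hQ : ∀ ρ > (0:ℝ), HasDerivAt Q (-Q ρ * Real.sin (χ ρ)) ρ)
    (hQnn : ∀ ρ > (0:ℝ), 0 ≤ Q ρ)
    -- Condition (C1)
    (hfbdd : ∃ Mf, ∀ ρ > (0:ℝ), |f ρ| ≤ Mf)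
    (hQbdd : ∃ MQ, ∀ ρ > (0:ℝ), |Q ρ| ≤ MQ)
    (hflim : ∃ Lf, Tendsto f atTop (𝓝 Lf))
    (hQlim : ∃ LQ, Tendsto Q atTop (𝓝 LQ))
    (f0 : ℝ) (hf0 : Tendsto f (𝓝[>] (0:ℝ)) (𝓝 f0)) (hf0ne : f0 ≠ 0) :
    (f0 < 0 → Tendsto (fun ρ => ε * χ ρ) (𝓝[>] (0:ℝ)) atTop) ∧
    (0 < f0 → Tendsto (fun ρ => ε * χ ρ) (𝓝[>] (0:ℝ)) atBot) := by
  have hε2 : ε * ε = 1 := by rcases hε with rfl | rfl <;> norm_num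
  have hεabs : |ε| = 1 := by rcases hε with rfl | rfl <;> norm_num
  have hrbd : ∀ ρ : ℝ, |ε * (1 - Real.cos (χ ρ))| ≤ 2 := by
    intro ρ
    rw [abs_mul, hεabs, one_mul]
    have h1 := Real.cos_le_one (χ ρ)
    have h2 := Real.neg_one_le_cos (χ ρ)
    rw [abs_le]; constructor <;> linarith
  constructor
  · -- f0 < 0 : apply core to negated functions
    intro hneg
    have h := core_atBot (fun ρ => -(ε * χ ρ)) (fun ρ => -(ε * a ρ)) (fun ρ => -(f ρ))
      (by
        intro ρ hρ
        refine ⟨-(ε * (1 - Real.cos (χ ρ))), by simpa using hrbd ρ, ?_⟩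
        have hd : HasDerivAt (fun x => -(ε * χ x)) (-(ε * (a ρ + 1 - Real.cos (χ ρ)))) ρ :=
          ((hχ ρ hρ).const_mul ε).neg
        convert hd using 1
        ring)
      (by
        intro ρ hρ
        have hd : HasDerivAt (fun x => -(ε * a x)) (-(ε * (-ε * f ρ / ρ ^ 2))) ρ :=
          ((ha ρ hρ).const_mul ε).neg
        convert hd using 1
        rcases hε with rfl | rfl <;> ring)
      (-f0) hf0.neg (by linarith)
    exact tendsto_neg_atBot_iff.mp h
  · -- 0 < f0
    intro hpos
    exact core_atBot (fun ρ => ε * χ ρ) (fun ρ => ε * a ρ) f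
      (by
        intro ρ hρ
        refine ⟨ε * (1 - Real.cos (χ ρ)), hrbd ρ, ?_⟩
        have hd : HasDerivAt (fun x => ε * χ x) (ε * (a ρ + 1 - Real.cos (χ ρ))) ρ :=
          (hχ ρ hρ).const_mul ε
        convert hd using 1
        ring)
      (by
        intro ρ hρ
        have hd : HasDerivAt (fun x => ε * a x) (ε * (-ε * f ρ / ρ ^ 2)) ρ :=
          (ha ρ hρ).const_mul ε
        convert hd using 1
        rcases hε with rfl | rfl <;> ring)
      f0 hf0 hpos
end

section
/- Lemma 3: if (χ, a, f, Q) is a solution of system (10) on (0,∞) satisfying conditions (C1) and (C2), and Q(ρ₀) > 0 for some ρ₀ > 0, then the limit a_∞ of a(ρ) as ρ → ∞ (which exists by (C1)) satisfies −2 ≤ a_∞ ≤ 0. -/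
/-!
If `a_∞ ∉ [-2, 0]`, then `χ' = a + 1 - cos χ` eventually has a fixed sign `σ` and
`σ χ' ≥ c > 0`, since `a ≤ χ' ≤ a + 2`. The `sin χ` terms cancel in `(Q χ')' = Q a'`, and
`|a'| ≤ M / ρ²` with `Q ≤ σ Q χ' / c`, so `w = σ Q χ'` satisfies `w' ≥ -(M / c) w / ρ²`.
Hence `exp (-(M / c) / ρ) w` is nondecreasing, so `w` stays bounded away from `0` once it is
positive, which it is because `Q > 0` beyond `ρ₀` (`Q e^ρ` is nondecreasing). But `w → 0`,
as `Q → 0` and `χ'` is bounded.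
-/

open Real Filter Topology Set

theorem monotoneOn_exp_mul_of_hasDerivAt {s : Set ℝ} (hs : Convex ℝ s) {w w' G g : ℝ → ℝ}
    (hw : ∀ x ∈ s, HasDerivAt w (w' x) x) (hG : ∀ x ∈ s, HasDerivAt G (g x) x)
    (hw' : ∀ x ∈ s, -(g x * w x) ≤ w' x) :
    MonotoneOn (fun x => exp (G x) * w x) s := by
  have hderiv : ∀ x ∈ s, HasDerivAt (fun x => exp (G x) * w x)
      (exp (G x) * (w' x + g x * w x)) x := fun x hx =>
    ((hG x hx).exp.mul (hw x hx)).congr_deriv (by ring)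
  refine monotoneOn_of_hasDerivWithinAt_nonneg hs
    (fun x hx => (hderiv x hx).continuousAt.continuousWithinAt)
    (fun x hx => (hderiv x (interior_subset hx)).hasDerivWithinAt)
    (fun x hx => mul_nonneg (exp_pos _).le ?_)
  linarith [hw' x (interior_subset hx)]

theorem pos_of_hasDerivAt_ge_neg {Q Q' : ℝ → ℝ} {ρ₀ : ℝ}
    (hQ : ∀ ρ ≥ ρ₀, HasDerivAt Q (Q' ρ) ρ) (hQ' : ∀ ρ ≥ ρ₀, -Q ρ ≤ Q' ρ) (hQρ₀ : 0 < Q ρ₀) :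
    ∀ ρ ≥ ρ₀, 0 < Q ρ := by
  have hmono := monotoneOn_exp_mul_of_hasDerivAt (convex_Ici ρ₀) hQ
    (fun x _ => hasDerivAt_id x) (g := fun _ => 1) (fun x hx => by simpa using hQ' x hx)
  intro ρ hρ
  have key : exp ρ₀ * Q ρ₀ ≤ exp ρ * Q ρ := hmono self_mem_Ici hρ hρ
  exact pos_of_mul_pos_right ((mul_pos (exp_pos _) hQρ₀).trans_le key) (exp_pos _).le

theorem not_tendsto_zero_of_hasDerivAt_ge {w w' : ℝ → ℝ} {K R : ℝ} (hR : 0 < R)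
    (hw : ∀ ρ ≥ R, HasDerivAt w (w' ρ) ρ) (hw' : ∀ ρ ≥ R, -(K / ρ ^ 2 * w ρ) ≤ w' ρ)
    (hwR : 0 < w R) : ¬ Tendsto w atTop (𝓝 0) := by
  intro hlim
  have hG : ∀ ρ ≥ R, HasDerivAt (fun ρ => -(K / ρ)) (K / ρ ^ 2) ρ := fun ρ hρ =>
    (((hasDerivAt_inv (hR.trans_le hρ).ne').const_mul K).neg).congr_deriv (by field_simp)
  have hmono := monotoneOn_exp_mul_of_hasDerivAt (convex_Ici R) hw hG hw'
  have hweighted : Tendsto (fun ρ => exp (-(K / ρ)) * w ρ) atTop (𝓝 0) := by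
    have hexp : Tendsto (fun ρ => exp (-(K / ρ))) atTop (𝓝 (exp (-0))) :=
      (continuous_exp.tendsto _).comp (tendsto_const_nhds.div_atTop tendsto_id).neg
    simpa using hexp.mul hlim
  have hbound : ∀ᶠ ρ in atTop, exp (-(K / R)) * w R ≤ exp (-(K / ρ)) * w ρ :=
    eventually_ge_atTop R |>.mono fun ρ hρ => hmono self_mem_Ici hρ hρ
  exact (mul_pos (exp_pos _) hwR).not_ge (ge_of_tendsto hweighted hbound)

theorem hasDerivAt_mul_add_one_sub_cos {χ a Q : ℝ → ℝ} {a' ρ : ℝ}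
    (hχ : HasDerivAt χ (a ρ + 1 - cos (χ ρ)) ρ) (ha : HasDerivAt a a' ρ)
    (hQ : HasDerivAt Q (-Q ρ * sin (χ ρ)) ρ) :
    HasDerivAt (fun r => Q r * (a r + 1 - cos (χ r))) (Q ρ * a') ρ :=
  (hQ.mul ((ha.add_const 1).sub hχ.cos)).congr_deriv (by simp only [Pi.sub_apply]; ring)

theorem exists_sign_eventually_le_mul_add_one_sub_cos {a θ : ℝ → ℝ} {aInf : ℝ}
    (ha : Tendsto a atTop (𝓝 aInf)) (hout : aInf < -2 ∨ 0 < aInf) :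
    ∃ σ : ℝ, |σ| = 1 ∧ ∃ c > 0, ∀ᶠ ρ in atTop, c ≤ σ * (a ρ + 1 - cos (θ ρ)) := by
  rcases hout with hneg | hpos
  · refine ⟨-1, by simp, (-2 - aInf) / 2, by linarith, ?_⟩
    filter_upwards [ha.eventually (gt_mem_nhds (show aInf < (aInf - 2) / 2 by linarith))]
      with ρ hρ
    linarith [neg_one_le_cos (θ ρ)]
  · refine ⟨1, by simp, aInf / 2, by linarith, ?_⟩
    filter_upwards [ha.eventually (lt_mem_nhds (show aInf / 2 < aInf by linarith))] with ρ hρ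
    linarith [cos_le_one (θ ρ)]

theorem tendsto_mul_add_one_sub_cos_zero {Q a θ : ℝ → ℝ} {aInf : ℝ}
    (hQ : Tendsto Q atTop (𝓝 0)) (ha : Tendsto a atTop (𝓝 aInf)) :
    Tendsto (fun ρ => Q ρ * (a ρ + 1 - cos (θ ρ))) atTop (𝓝 0) := by
  obtain ⟨b, hb⟩ := ha.norm.isBoundedUnder_le
  refine hQ.zero_mul_isBoundedUnder_le (isBoundedUnder_of_eventually_le (a := b + 2) ?_)
  filter_upwards [eventually_map.mp hb] with ρ hρ
  simp only [Function.comp_apply, norm_eq_abs] at hρ ⊢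
  have := abs_le.mp hρ
  rw [abs_le]
  constructor <;> linarith [neg_one_le_cos (θ ρ), cos_le_one (θ ρ)]

theorem not_tendsto_zero_of_sign_mul_ge {χ a f Q : ℝ → ℝ} {ε σ c M R : ℝ}
    (hε : ε = 1 ∨ ε = -1)
    (hχ : ∀ ρ > (0:ℝ), HasDerivAt χ (a ρ + 1 - cos (χ ρ)) ρ)
    (ha : ∀ ρ > (0:ℝ), HasDerivAt a (-ε * f ρ / ρ ^ 2) ρ)
    (hQ : ∀ ρ > (0:ℝ), HasDerivAt Q (-Q ρ * sin (χ ρ)) ρ)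
    (hM : ∀ ρ > (0:ℝ), |f ρ| ≤ M) (hσ : |σ| = 1) (hc : 0 < c) (hR : 0 < R)
    (hQpos : ∀ ρ ≥ R, 0 < Q ρ) (hlow : ∀ ρ ≥ R, c ≤ σ * (a ρ + 1 - cos (χ ρ))) :
    ¬ Tendsto (fun ρ => σ * (Q ρ * (a ρ + 1 - cos (χ ρ)))) atTop (𝓝 0) := by
  refine not_tendsto_zero_of_hasDerivAt_ge (K := M / c) hR
    (fun ρ hρ => ((hasDerivAt_mul_add_one_sub_cos (hχ ρ (hR.trans_le hρ))
      (ha ρ (hR.trans_le hρ)) (hQ ρ (hR.trans_le hρ))).const_mul σ)) (fun ρ hρ => ?_)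
    (by nlinarith [hQpos R le_rfl, hlow R le_rfl])
  have hρ0 : 0 < ρ := hR.trans_le hρ
  have hforce : |σ * (-ε * f ρ)| ≤ M := by
    rcases hε with rfl | rfl <;> simpa [abs_mul, hσ] using hM ρ hρ0
  have hM0 : 0 ≤ M := (abs_nonneg _).trans hforce
  have hQM : Q ρ * M ≤ M / c * (σ * (Q ρ * (a ρ + 1 - cos (χ ρ)))) := by
    calc Q ρ * M = M / c * (Q ρ * c) := by field_simp
      _ ≤ M / c * (Q ρ * (σ * (a ρ + 1 - cos (χ ρ)))) := by gcongr; exact (hQpos ρ hρ).le; exact hlow ρ hρ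
      _ = _ := by ring
  have hforceQ : -(Q ρ * M) ≤ Q ρ * (σ * (-ε * f ρ)) := by
    nlinarith [(abs_le.mp hforce).1, hQpos ρ hρ]
  calc -(M / c / ρ ^ 2 * (σ * (Q ρ * (a ρ + 1 - cos (χ ρ)))))
      = -(M / c * (σ * (Q ρ * (a ρ + 1 - cos (χ ρ))))) / ρ ^ 2 := by ring
    _ ≤ -(Q ρ * M) / ρ ^ 2 := by gcongr
    _ ≤ Q ρ * (σ * (-ε * f ρ)) / ρ ^ 2 := by gcongr
    _ = σ * (Q ρ * (-ε * f ρ / ρ ^ 2)) := by ring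

theorem lemma3_asymptotic_potential_bounds_general
    (χ a f Q : ℝ → ℝ) (ε : ℝ) (hε : ε = 1 ∨ ε = -1)
    (hχ : ∀ ρ > (0:ℝ), HasDerivAt χ (a ρ + 1 - Real.cos (χ ρ)) ρ)
    (ha : ∀ ρ > (0:ℝ), HasDerivAt a (-ε * f ρ / ρ ^ 2) ρ)
    (hQ : ∀ ρ > (0:ℝ), HasDerivAt Q (-Q ρ * Real.sin (χ ρ)) ρ)
    (hQnn : ∀ ρ > (0:ℝ), 0 ≤ Q ρ)
    -- Condition (C1)
    (hfbdd : ∃ Mf, ∀ ρ > (0:ℝ), |f ρ| ≤ Mf)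
    -- Condition (C2)
    (hC2 : Tendsto Q atTop (𝓝 0))
    (ρ₀ : ℝ) (hρ₀ : 0 < ρ₀) (hQρ₀ : 0 < Q ρ₀)
    (aInf : ℝ) (haInf : Tendsto a atTop (𝓝 aInf)) :
    -2 ≤ aInf ∧ aInf ≤ 0 := by
  obtain ⟨M, hM⟩ := hfbdd
  have hQpos : ∀ ρ ≥ ρ₀, 0 < Q ρ :=
    pos_of_hasDerivAt_ge_neg (fun ρ hρ => hQ ρ (hρ₀.trans_le hρ))
      (fun ρ hρ => by nlinarith [hQnn ρ (hρ₀.trans_le hρ), sin_le_one (χ ρ)]) hQρ₀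
  by_contra hout
  obtain ⟨σ, hσ, c, hc, hlow⟩ :=
    exists_sign_eventually_le_mul_add_one_sub_cos (θ := χ) haInf (by contrapose! hout; exact hout)
  obtain ⟨N, hN⟩ := eventually_atTop.mp hlow
  have hR : ρ₀ ≤ max N ρ₀ := le_max_right N ρ₀
  refine not_tendsto_zero_of_sign_mul_ge hε hχ ha hQ hM hσ hc (hρ₀.trans_le hR)
    (fun ρ hρ => hQpos ρ (hR.trans hρ)) (fun ρ hρ => hN ρ ((le_max_left N ρ₀).trans hρ)) ?_
  simpa using (tendsto_mul_add_one_sub_cos_zero hC2 haInf).const_mul σ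

/-- **Lemma 3.** For a solution `(χ, a, f, Q)` of system (10) on
`(0,∞)` satisfying conditions (C1) and (C2), with `Q(ρ₀) > 0` for some `ρ₀ > 0`,
the asymptotic value `a_∞` of the potential satisfies `−2 ≤ a_∞ ≤ 0`. -/
theorem lemma3_asymptotic_potential_bounds
    (χ a f Q : ℝ → ℝ) (ε : ℝ) (hε : ε = 1 ∨ ε = -1)
    (hχ : ∀ ρ > (0:ℝ), HasDerivAt χ (a ρ + 1 - Real.cos (χ ρ)) ρ)
    (ha : ∀ ρ > (0:ℝ), HasDerivAt a (-ε * f ρ / ρ ^ 2) ρ)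
    (hf : ∀ ρ > (0:ℝ), HasDerivAt f (Q ρ) ρ)
    (hQ : ∀ ρ > (0:ℝ), HasDerivAt Q (-Q ρ * Real.sin (χ ρ)) ρ)
    (hQnn : ∀ ρ > (0:ℝ), 0 ≤ Q ρ)
    -- Condition (C1)
    (hfbdd : ∃ Mf, ∀ ρ > (0:ℝ), |f ρ| ≤ Mf)
    (hQbdd : ∃ MQ, ∀ ρ > (0:ℝ), |Q ρ| ≤ MQ)
    (hflim : ∃ Lf, Tendsto f atTop (𝓝 Lf))
    -- Condition (C2)
    (hC2 : Tendsto Q atTop (𝓝 0))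
    (ρ₀ : ℝ) (hρ₀ : 0 < ρ₀) (hQρ₀ : 0 < Q ρ₀)
    (aInf : ℝ) (haInf : Tendsto a atTop (𝓝 aInf)) :
    -2 ≤ aInf ∧ aInf ≤ 0 :=
  lemma3_asymptotic_potential_bounds_general χ a f Q ε hε hχ ha hQ hQnn hfbdd hC2 ρ₀ hρ₀ hQρ₀ aInf
    haInf
end

section
/- Main Theorem (nonexistence of everywhere-regular solutions): there is no nontrivial solution of system (10). Precisely, if (χ, a, f, Q) is a solution of system (10) on (0,∞) satisfying conditions (C1) and (C2), and moreover a is bounded on (0,∞) and the function P(ρ) = Q(ρ)/ρ² is bounded on (0,∞), then Q ≡ 0 on (0,∞). -/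
open Real Filter Topology Set

/-!
Since `Q ≥ 0` and `|sin χ| ≤ 1`, the equation `Q' = -Q sin χ` gives `|Q'| ≤ |Q|`, so by Grönwall
`Q ρ₀ ≤ Q ρ · exp (ρ₀ - ρ)` for `0 < ρ ≤ ρ₀`. Boundedness of `Q / ρ²` forces `Q ρ → 0` as `ρ → 0⁺`,
hence `Q ρ₀ = 0`.
-/

section Gronwall

variable {E : Type*} [NormedAddCommGroup E] [NormedSpace ℝ E]

theorem norm_le_norm_mul_exp_of_norm_deriv_le {f f' : ℝ → E} {K a b : ℝ} (hab : a ≤ b)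
    (hf : ∀ x ∈ Icc a b, HasDerivAt f (f' x) x) (bound : ∀ x ∈ Icc a b, ‖f' x‖ ≤ K * ‖f x‖) :
    ‖f b‖ ≤ ‖f a‖ * exp (K * (b - a)) := by
  have h := norm_le_gronwallBound_of_norm_deriv_right_le (ε := 0)
    (fun x hx => (hf x hx).continuousAt.continuousWithinAt)
    (fun x hx => (hf x (Ico_subset_Icc_self hx)).hasDerivWithinAt) le_rfl
    (fun x hx => by simpa using bound x (Ico_subset_Icc_self hx)) b ⟨hab, le_rfl⟩
  rwa [gronwallBound_ε0] at h

theorem eq_zero_of_norm_deriv_le_of_tendsto_nhdsGT {f f' : ℝ → E} {K a : ℝ}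
    (hf : ∀ x > a, HasDerivAt f (f' x) x) (bound : ∀ x > a, ‖f' x‖ ≤ K * ‖f x‖)
    (hlim : Tendsto f (𝓝[>] a) (𝓝 0)) :
    ∀ x > a, f x = 0 := by
  intro x hx
  have hrhs : Tendsto (fun y => ‖f y‖ * exp (K * (x - y))) (𝓝[>] a) (𝓝 0) := by
    have hexp : Tendsto (fun y => exp (K * (x - y))) (𝓝[>] a) (𝓝 (exp (K * (x - a)))) :=
      ((continuous_const.mul (continuous_const.sub continuous_id)).rexp.tendsto a).mono_left
        nhdsWithin_le_nhds
    simpa using hlim.norm.mul hexp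
  have hle : ‖f x‖ ≤ 0 := by
    refine ge_of_tendsto hrhs ?_
    filter_upwards [Ioo_mem_nhdsGT hx] with y hy
    exact norm_le_norm_mul_exp_of_norm_deriv_le hy.2.le
      (fun z hz => hf z (hy.1.trans_le hz.1)) (fun z hz => bound z (hy.1.trans_le hz.1))
  exact norm_le_zero_iff.mp hle

end Gronwall

theorem tendsto_nhdsGT_zero_of_nonneg_of_div_sq_le {Q : ℝ → ℝ} {M : ℝ}
    (hnn : ∀ ρ > (0:ℝ), 0 ≤ Q ρ) (hM : ∀ ρ > (0:ℝ), Q ρ / ρ ^ 2 ≤ M) :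
    Tendsto Q (𝓝[>] 0) (𝓝 0) := by
  have hsq : Tendsto (fun ρ : ℝ => M * ρ ^ 2) (𝓝[>] 0) (𝓝 0) :=
    ((by fun_prop : Continuous fun ρ : ℝ => M * ρ ^ 2).tendsto' 0 0 (by simp)).mono_left
      nhdsWithin_le_nhds
  refine tendsto_of_tendsto_of_tendsto_of_le_of_le' tendsto_const_nhds hsq ?_ ?_
  · filter_upwards [self_mem_nhdsWithin] with ρ hρ using hnn ρ hρ
  · filter_upwards [self_mem_nhdsWithin] with ρ (hρ : 0 < ρ)
    exact (div_le_iff₀ (pow_pos hρ 2)).mp (hM ρ hρ)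

theorem no_nontrivial_regular_solution_general
    (χ Q : ℝ → ℝ)
    (hQ : ∀ ρ > (0:ℝ), HasDerivAt Q (-Q ρ * Real.sin (χ ρ)) ρ)
    (hQnn : ∀ ρ > (0:ℝ), 0 ≤ Q ρ)
    -- regularity at the origin
    (hPbdd : ∃ MP, ∀ ρ > (0:ℝ), Q ρ / ρ ^ 2 ≤ MP) :
    ∀ ρ > (0:ℝ), Q ρ = 0 := by
  obtain ⟨MP, hMP⟩ := hPbdd
  refine eq_zero_of_norm_deriv_le_of_tendsto_nhdsGT (K := 1) hQ (fun ρ _ => ?_)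
    (tendsto_nhdsGT_zero_of_nonneg_of_div_sq_le hQnn hMP)
  rw [norm_mul, norm_neg, one_mul]
  exact mul_le_of_le_one_right (norm_nonneg _) (abs_sin_le_one _)

/-- **Main Theorem.** Nonexistence of everywhere-regular solutions:
if `(χ, a, f, Q)` solves system (10) on `(0,∞)` under conditions (C1) and (C2),
with `a` bounded on `(0,∞)` and `P(ρ) = Q(ρ)/ρ²` bounded on `(0,∞)`, then
`Q ≡ 0` on `(0,∞)`. -/
theorem no_nontrivial_regular_solution
    (χ a f Q : ℝ → ℝ) (ε : ℝ) (hε : ε = 1 ∨ ε = -1)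
    (hχ : ∀ ρ > (0:ℝ), HasDerivAt χ (a ρ + 1 - Real.cos (χ ρ)) ρ)
    (ha : ∀ ρ > (0:ℝ), HasDerivAt a (-ε * f ρ / ρ ^ 2) ρ)
    (hf : ∀ ρ > (0:ℝ), HasDerivAt f (Q ρ) ρ)
    (hQ : ∀ ρ > (0:ℝ), HasDerivAt Q (-Q ρ * Real.sin (χ ρ)) ρ)
    (hQnn : ∀ ρ > (0:ℝ), 0 ≤ Q ρ)
    -- Condition (C1)
    (hfbdd : ∃ Mf, ∀ ρ > (0:ℝ), |f ρ| ≤ Mf)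
    (hQbdd : ∃ MQ, ∀ ρ > (0:ℝ), |Q ρ| ≤ MQ)
    (hflim : ∃ Lf, Tendsto f atTop (𝓝 Lf))
    -- Condition (C2)
    (hC2 : Tendsto Q atTop (𝓝 0))
    -- regularity at the origin
    (habdd : ∃ Ma, ∀ ρ > (0:ℝ), |a ρ| ≤ Ma)
    (hPbdd : ∃ MP, ∀ ρ > (0:ℝ), Q ρ / ρ ^ 2 ≤ MP) :
    ∀ ρ > (0:ℝ), Q ρ = 0 :=
  no_nontrivial_regular_solution_general χ Q hQ hQnn hPbdd
end

section
/- First-order system for the half-angle variables: let (χ, a, f, Q) be a solution of system (10) on (0,∞) with ε = 1 and Q(ρ) > 0 for all ρ > 0, and define U(ρ) = √(Q(ρ)) cos(χ(ρ)/2) and V(ρ) = √(Q(ρ)) sin(χ(ρ)/2). Then U and V are differentiable on (0,∞) and satisfy dU/dρ = −(1/2)(a + 2)V and dV/dρ = (1/2)aU. -/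
open Real Filter Topology Set

/-- With `Q' = -Q sin θ`, the logarithmic derivative of `√Q` is `-(1/2) sin θ`, which the
double-angle formula splits into the half-angle factors. -/
lemma hasDerivAt_sqrt_of_hasDerivAt_neg_mul_sin {Q : ℝ → ℝ} {x θ : ℝ}
    (hQ : HasDerivAt Q (-Q x * sin θ) x) (hQx : 0 < Q x) :
    HasDerivAt (fun σ => √(Q σ)) (-(√(Q x) * sin (θ / 2) * cos (θ / 2))) x := by
  refine (hQ.sqrt hQx.ne').congr_deriv ?_
  have hsin : sin θ = 2 * sin (θ / 2) * cos (θ / 2) := by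
    rw [← sin_two_mul, mul_div_cancel₀ _ two_ne_zero]
  have hsqrt : √(Q x) ^ 2 = Q x := sq_sqrt hQx.le
  have hsqrt_ne : √(Q x) ≠ 0 := (sqrt_pos.mpr hQx).ne'
  rw [hsin]
  field_simp
  linear_combination sin (θ / 2) * cos (θ / 2) * hsqrt

theorem half_angle_first_order_system_general
    (χ a Q : ℝ → ℝ)
    (hχ : ∀ ρ > (0:ℝ), HasDerivAt χ (a ρ + 1 - Real.cos (χ ρ)) ρ)
    (hQ : ∀ ρ > (0:ℝ), HasDerivAt Q (-Q ρ * Real.sin (χ ρ)) ρ)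
    (hQpos : ∀ ρ > (0:ℝ), 0 < Q ρ) :
    ∀ ρ > (0:ℝ),
      HasDerivAt (fun σ => Real.sqrt (Q σ) * Real.cos (χ σ / 2))
        (-(1 / 2) * (a ρ + 2) * (Real.sqrt (Q ρ) * Real.sin (χ ρ / 2))) ρ ∧
      HasDerivAt (fun σ => Real.sqrt (Q σ) * Real.sin (χ σ / 2))
        ((1 / 2) * a ρ * (Real.sqrt (Q ρ) * Real.cos (χ ρ / 2))) ρ := by
  intro ρ hρ
  have hsqrt := hasDerivAt_sqrt_of_hasDerivAt_neg_mul_sin (hQ ρ hρ) (hQpos ρ hρ)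
  have hhalf := (hχ ρ hρ).div_const 2
  have hcos : cos (χ ρ) = 2 * cos (χ ρ / 2) ^ 2 - 1 := by
    rw [← cos_two_mul, mul_div_cancel₀ _ two_ne_zero]
  constructor
  · exact (hsqrt.mul hhalf.cos).congr_deriv (by rw [hcos]; ring)
  · refine (hsqrt.mul hhalf.sin).congr_deriv ?_
    rw [hcos]
    linear_combination -(√(Q ρ) * cos (χ ρ / 2)) * sin_sq_add_cos_sq (χ ρ / 2)

/-- First-order system for the half-angle variables: for a solution
`(χ, a, f, Q)` of system (10) on `(0,∞)` with `ε = 1` and `Q > 0` on `(0,∞)`, the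
functions `U = √Q cos(χ/2)` and `V = √Q sin(χ/2)` are differentiable on `(0,∞)`
and satisfy `dU/dρ = −(1/2)(a + 2)V` and `dV/dρ = (1/2) a U`. -/
theorem half_angle_first_order_system
    (χ a f Q : ℝ → ℝ)
    (hχ : ∀ ρ > (0:ℝ), HasDerivAt χ (a ρ + 1 - Real.cos (χ ρ)) ρ)
    (ha : ∀ ρ > (0:ℝ), HasDerivAt a (-(1:ℝ) * f ρ / ρ ^ 2) ρ)
    (hf : ∀ ρ > (0:ℝ), HasDerivAt f (Q ρ) ρ)
    (hQ : ∀ ρ > (0:ℝ), HasDerivAt Q (-Q ρ * Real.sin (χ ρ)) ρ)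
    (hQpos : ∀ ρ > (0:ℝ), 0 < Q ρ) :
    ∀ ρ > (0:ℝ),
      HasDerivAt (fun σ => Real.sqrt (Q σ) * Real.cos (χ σ / 2))
        (-(1 / 2) * (a ρ + 2) * (Real.sqrt (Q ρ) * Real.sin (χ ρ / 2))) ρ ∧
      HasDerivAt (fun σ => Real.sqrt (Q σ) * Real.sin (χ σ / 2))
        ((1 / 2) * a ρ * (Real.sqrt (Q ρ) * Real.cos (χ ρ / 2))) ρ :=
  half_angle_first_order_system_general χ a Q hχ hQ hQpos
end

section
/- Second-order equations (11) for the half-angle variables: let (χ, a, f, Q) be a solution of system (10) on (0,∞) with ε = 1, a twice differentiable, and Q(ρ) > 0 for all ρ > 0, and define U(ρ) = √(Q(ρ)) cos(χ(ρ)/2) and V(ρ) = √(Q(ρ)) sin(χ(ρ)/2). Then on any interval where a + 2 ≠ 0 the function U satisfies d²U/dρ² + (f/(ρ²(a + 2))) dU/dρ + (1/4)a(a + 2)U = 0, and on any interval where a ≠ 0 the function V satisfies d²V/dρ² + (f/(ρ² a)) dV/dρ + (1/4)a(a + 2)V = 0. -/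
open Real Filter Topology Set

/-!
Along a solution, `√Q` and `χ/2` are polar coordinates for `(U, V)`, and the double-angle
formulas turn system (10) into the linear first-order system
`U' = -(a + 2)/2 · V`, `V' = a/2 · U`.
Differentiating one equation and eliminating the other unknown, which needs `a + 2 ≠ 0`
resp. `a ≠ 0`, gives (11).
-/

theorem Real.sin_eq_two_mul_sin_half_mul_cos_half (θ : ℝ) :
    sin θ = 2 * sin (θ / 2) * cos (θ / 2) := by
  rw [← sin_two_mul, mul_div_cancel₀ _ two_ne_zero]

theorem Real.cos_eq_two_mul_cos_half_sq_sub_one (θ : ℝ) :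
    cos θ = 2 * cos (θ / 2) ^ 2 - 1 := by
  rw [← cos_two_mul, mul_div_cancel₀ _ two_ne_zero]

section HalfAngle

variable {χ Q : ℝ → ℝ} {x c : ℝ}

theorem hasDerivAt_sqrt_of_hasDerivAt_eq_neg_mul_sin
    (hQ : HasDerivAt Q (-Q x * sin (χ x)) x) (hQx : 0 < Q x) :
    HasDerivAt (fun y => √(Q y)) (-√(Q x) * sin (χ x / 2) * cos (χ x / 2)) x := by
  refine (hQ.sqrt hQx.ne').congr_deriv ?_
  rw [div_eq_iff (mul_ne_zero two_ne_zero (sqrt_pos.mpr hQx).ne'),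
    sin_eq_two_mul_sin_half_mul_cos_half]
  linear_combination (2 * sin (χ x / 2) * cos (χ x / 2)) * sq_sqrt hQx.le

theorem hasDerivAt_sqrt_mul_cos_half
    (hχ : HasDerivAt χ (c + 1 - cos (χ x)) x) (hQ : HasDerivAt Q (-Q x * sin (χ x)) x)
    (hQx : 0 < Q x) :
    HasDerivAt (fun y => √(Q y) * cos (χ y / 2))
      (-(c + 2) / 2 * (√(Q x) * sin (χ x / 2))) x := by
  refine ((hasDerivAt_sqrt_of_hasDerivAt_eq_neg_mul_sin hQ hQx).mul
    (hχ.div_const 2).cos).congr_deriv ?_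
  linear_combination (√(Q x) * sin (χ x / 2) / 2) * cos_eq_two_mul_cos_half_sq_sub_one (χ x)

theorem hasDerivAt_sqrt_mul_sin_half
    (hχ : HasDerivAt χ (c + 1 - cos (χ x)) x) (hQ : HasDerivAt Q (-Q x * sin (χ x)) x)
    (hQx : 0 < Q x) :
    HasDerivAt (fun y => √(Q y) * sin (χ y / 2)) (c / 2 * (√(Q x) * cos (χ x / 2))) x := by
  refine ((hasDerivAt_sqrt_of_hasDerivAt_eq_neg_mul_sin hQ hQx).mul
    (hχ.div_const 2).sin).congr_deriv ?_
  linear_combination (-√(Q x) * cos (χ x / 2) / 2) * cos_eq_two_mul_cos_half_sq_sub_one (χ x)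
    - √(Q x) * cos (χ x / 2) * sin_sq_add_cos_sq (χ x / 2)

end HalfAngle

theorem deriv_deriv_eq_of_hasDerivAt_eq_mul {U V p : ℝ → ℝ} {x p' q : ℝ}
    (hU : ∀ᶠ y in 𝓝 x, HasDerivAt U (p y * V y) y) (hV : HasDerivAt V (q * U x) x)
    (hp : HasDerivAt p p' x) (hpx : p x ≠ 0) :
    deriv (deriv U) x = p' / p x * deriv U x + p x * q * U x := by
  have hU' : deriv U =ᶠ[𝓝 x] fun y => p y * V y := hU.mono fun y hy => hy.deriv
  rw [hU'.deriv_eq, (hp.fun_mul hV).deriv, hU.self_of_nhds.deriv]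
  field_simp

theorem half_angle_second_order_equations_general
    (χ a f Q : ℝ → ℝ)
    (hχ : ∀ ρ > (0:ℝ), HasDerivAt χ (a ρ + 1 - Real.cos (χ ρ)) ρ)
    (ha : ∀ ρ > (0:ℝ), HasDerivAt a (-(1:ℝ) * f ρ / ρ ^ 2) ρ)
    (hQ : ∀ ρ > (0:ℝ), HasDerivAt Q (-Q ρ * Real.sin (χ ρ)) ρ)
    (hQpos : ∀ ρ > (0:ℝ), 0 < Q ρ) :
    ∀ ρ > (0:ℝ),
      (a ρ + 2 ≠ 0 →
        deriv (deriv (fun σ => Real.sqrt (Q σ) * Real.cos (χ σ / 2))) ρ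
          + f ρ / (ρ ^ 2 * (a ρ + 2)) *
            deriv (fun σ => Real.sqrt (Q σ) * Real.cos (χ σ / 2)) ρ
          + (1 / 4) * a ρ * (a ρ + 2) * (Real.sqrt (Q ρ) * Real.cos (χ ρ / 2)) = 0) ∧
      (a ρ ≠ 0 →
        deriv (deriv (fun σ => Real.sqrt (Q σ) * Real.sin (χ σ / 2))) ρ
          + f ρ / (ρ ^ 2 * a ρ) *
            deriv (fun σ => Real.sqrt (Q σ) * Real.sin (χ σ / 2)) ρ
          + (1 / 4) * a ρ * (a ρ + 2) * (Real.sqrt (Q ρ) * Real.sin (χ ρ / 2)) = 0) := by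
  intro ρ hρ
  have hU σ (hσ : 0 < σ) := hasDerivAt_sqrt_mul_cos_half (hχ σ hσ) (hQ σ hσ) (hQpos σ hσ)
  have hV σ (hσ : 0 < σ) := hasDerivAt_sqrt_mul_sin_half (hχ σ hσ) (hQ σ hσ) (hQpos σ hσ)
  have hnear : ∀ᶠ σ in 𝓝 ρ, 0 < σ := eventually_gt_nhds hρ
  have hρ2 : ρ ^ 2 ≠ 0 := by positivity
  refine ⟨fun ha2 => ?_, fun ha0 => ?_⟩
  · rw [deriv_deriv_eq_of_hasDerivAt_eq_mul (p := fun σ => -(a σ + 2) / 2) (hnear.mono hU)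
      (hV ρ hρ) (((ha ρ hρ).add_const 2).neg.div_const 2) (div_ne_zero (neg_ne_zero.mpr ha2) two_ne_zero),
      (hU ρ hρ).deriv]
    field_simp
    ring
  · rw [deriv_deriv_eq_of_hasDerivAt_eq_mul (p := fun σ => a σ / 2) (hnear.mono hV)
      (hU ρ hρ) ((ha ρ hρ).div_const 2) (div_ne_zero ha0 two_ne_zero), (hV ρ hρ).deriv]
    field_simp
    ring

/-- Second-order equations (11) for the half-angle variables: for a
solution `(χ, a, f, Q)` of system (10) on `(0,∞)` with `ε = 1`, `a` twice
differentiable and `Q > 0` on `(0,∞)`, the functions `U = √Q cos(χ/2)` and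
`V = √Q sin(χ/2)` satisfy, wherever `a + 2 ≠ 0` resp. `a ≠ 0`,
`U'' + (f/(ρ²(a+2))) U' + (1/4)a(a+2)U = 0` and
`V'' + (f/(ρ² a)) V' + (1/4)a(a+2)V = 0`. -/
theorem half_angle_second_order_equations
    (χ a f Q : ℝ → ℝ)
    (hχ : ∀ ρ > (0:ℝ), HasDerivAt χ (a ρ + 1 - Real.cos (χ ρ)) ρ)
    (ha : ∀ ρ > (0:ℝ), HasDerivAt a (-(1:ℝ) * f ρ / ρ ^ 2) ρ)
    (hf : ∀ ρ > (0:ℝ), HasDerivAt f (Q ρ) ρ)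
    (hQ : ∀ ρ > (0:ℝ), HasDerivAt Q (-Q ρ * Real.sin (χ ρ)) ρ)
    (hQpos : ∀ ρ > (0:ℝ), 0 < Q ρ)
    (ha2 : ∀ ρ > (0:ℝ), DifferentiableAt ℝ (deriv a) ρ) :
    ∀ ρ > (0:ℝ),
      (a ρ + 2 ≠ 0 →
        deriv (deriv (fun σ => Real.sqrt (Q σ) * Real.cos (χ σ / 2))) ρ
          + f ρ / (ρ ^ 2 * (a ρ + 2)) *
            deriv (fun σ => Real.sqrt (Q σ) * Real.cos (χ σ / 2)) ρ
          + (1 / 4) * a ρ * (a ρ + 2) * (Real.sqrt (Q ρ) * Real.cos (χ ρ / 2)) = 0) ∧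
      (a ρ ≠ 0 →
        deriv (deriv (fun σ => Real.sqrt (Q σ) * Real.sin (χ σ / 2))) ρ
          + f ρ / (ρ ^ 2 * a ρ) *
            deriv (fun σ => Real.sqrt (Q σ) * Real.sin (χ σ / 2)) ρ
          + (1 / 4) * a ρ * (a ρ + 2) * (Real.sqrt (Q ρ) * Real.sin (χ ρ / 2)) = 0) :=
  half_angle_second_order_equations_general χ a f Q hχ ha hQ hQpos
end
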